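/- arXiv:2301.00945 — 3 statements merged into one kernel-verified Lean document; each statement's English description precedes it below -/
import Mathlib

section
/- For polynomials f(x), g(x), h(x) in R = F_{q²}[x]/⟨x^n − 1⟩, the Hermitian inner product of coefficient vectors satisfies ⟨[f(x)g(x)], [h(x)]⟩_h = ⟨[g(x)], [f̄^q(x)h(x)]⟩_h, where f̄^q(x) is obtained from f̄(x) = x^n f(x^{−1}) by raising each coefficient to the q-th power. -/
open Polynomial Finset

/-- The conjugate reciprocal `f̄^q(x)`: obtained from the image of `xⁿ f(x⁻¹)` in
`R = F_{q²}[x]/⟨xⁿ-1⟩` by raising each coefficient to the `q`-th power. -/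
noncomputable def cbarq {F : Type*} [Field F] (n q : ℕ) (f : F[X]) : F[X] :=
  ∑ i ∈ Finset.range n, C (((f %ₘ (X ^ n - 1)).coeff ((n - i) % n)) ^ q) * X ^ i

section Aux
variable {F : Type*} [Field F] {n : ℕ}

private lemma monic_aux (hn : 0 < n) : (X ^ n - 1 : F[X]).Monic := by
  simpa using monic_X_pow_sub_C (1 : F) hn.ne'

private lemma degree_aux (hn : 0 < n) : (X ^ n - 1 : F[X]).degree = n := by
  simpa using degree_X_pow_sub_C hn (1 : F)

private lemma modX_pow (hn : 0 < n) (i : ℕ) :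
    (X ^ i : F[X]) %ₘ (X ^ n - 1) = X ^ (i % n) := by
  have h2 : (X ^ (i % n) : F[X]) %ₘ (X ^ n - 1) = X ^ (i % n) := by
    rw [modByMonic_eq_self_iff (monic_aux hn), degree_aux hn, degree_X_pow]
    exact_mod_cast Nat.mod_lt i hn
  have hdvd : (X ^ n - 1 : F[X]) ∣ X ^ i - X ^ (i % n) := by
    have h1 : (X ^ n - 1 : F[X]) ∣ (X ^ n) ^ (i / n) - 1 ^ (i / n) :=
      sub_dvd_pow_sub_pow _ _ _
    have heq : (X ^ i : F[X]) - X ^ (i % n)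
        = X ^ (i % n) * ((X ^ n) ^ (i / n) - 1 ^ (i / n)) := by
      rw [mul_sub, ← pow_mul, ← pow_add, one_pow, mul_one]
      congr 2
      exact (Nat.mod_add_div i n).symm
    rw [heq]
    exact Dvd.dvd.mul_left h1 _
  have h0 : (X ^ i - X ^ (i % n) : F[X]) %ₘ (X ^ n - 1) = 0 :=
    (modByMonic_eq_zero_iff_dvd (monic_aux hn)).2 hdvd
  rw [sub_modByMonic, sub_eq_zero, h2] at h0
  exact h0

private lemma mod_congr (hn : 0 < n) {p r : F[X]} (hdvd : (X ^ n - 1 : F[X]) ∣ (p - r)) :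
    p %ₘ (X ^ n - 1) = r %ₘ (X ^ n - 1) := by
  have h0 : (p - r) %ₘ (X ^ n - 1) = 0 :=
    (modByMonic_eq_zero_iff_dvd (monic_aux hn)).2 hdvd
  rw [sub_modByMonic, sub_eq_zero] at h0
  exact h0

private lemma natDegree_mod_lt (hn : 0 < n) (p : F[X]) :
    (p %ₘ (X ^ n - 1)).natDegree < n := by
  have h := degree_modByMonic_lt p (monic_aux hn)
  rw [degree_aux hn] at h
  by_cases h0 : p %ₘ (X ^ n - 1) = 0
  · simpa [h0] using hn
  · exact (natDegree_lt_iff_degree_lt h0).2 h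

private lemma monomial_mod_coeff (hn : 0 < n) (k : ℕ) (c : F) (i : ℕ) :
    ((monomial k c : F[X]) %ₘ (X ^ n - 1)).coeff i = c * (if (k % n) = i then 1 else 0) := by
  rw [← C_mul_X_pow_eq_monomial, ← smul_eq_C_mul, smul_modByMonic, modX_pow hn,
    coeff_smul, coeff_X_pow, smul_eq_mul]
  simp [eq_comm]

private lemma prod_mod_coeff (hn : 0 < n) (u v : F[X]) (i : ℕ) :
    ((u * v) %ₘ (X ^ n - 1)).coeff i =
      ∑ α ∈ range n, ∑ β ∈ range n,
        (u %ₘ (X ^ n - 1)).coeff α * (v %ₘ (X ^ n - 1)).coeff β *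
          (if (α + β) % n = i then 1 else 0) := by
  have hu := natDegree_mod_lt hn u
  have hv := natDegree_mod_lt hn v
  set U := u %ₘ (X ^ n - 1) with hU
  set V := v %ₘ (X ^ n - 1) with hV
  have h1 : (u * v) %ₘ (X ^ n - 1) = (U * V) %ₘ (X ^ n - 1) := by
    apply mod_congr hn
    have hud : (X ^ n - 1 : F[X]) ∣ u - U := by
      refine ⟨u /ₘ (X ^ n - 1), ?_⟩
      have := modByMonic_add_div u (X ^ n - 1)
      rw [hU]; linear_combination -this
    have hvd : (X ^ n - 1 : F[X]) ∣ v - V := by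
      refine ⟨v /ₘ (X ^ n - 1), ?_⟩
      have := modByMonic_add_div v (X ^ n - 1)
      rw [hV]; linear_combination -this
    have hsplit : u * v - U * V = (u - U) * v + U * (v - V) := by ring
    rw [hsplit]
    exact dvd_add (hud.mul_right _) (hvd.mul_left _)
  rw [h1]
  conv_lhs => rw [U.as_sum_range' n hu, V.as_sum_range' n hv, sum_mul_sum]
  have hmod : ∀ r : F[X], r %ₘ (X ^ n - 1) = modByMonicHom (X ^ n - 1) r := fun _ => rfl
  rw [hmod, map_sum, finset_sum_coeff]
  refine sum_congr rfl fun α hα => ?_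
  rw [map_sum, finset_sum_coeff]
  refine sum_congr rfl fun β hβ => ?_
  rw [← hmod, monomial_mul_monomial, monomial_mod_coeff hn]

private lemma cbarq_mod (hn : 0 < n) (qq : ℕ) (f : F[X]) :
    cbarq n qq f %ₘ (X ^ n - 1) = cbarq n qq f := by
  rw [modByMonic_eq_self_iff (monic_aux hn), degree_aux hn, cbarq]
  apply lt_of_le_of_lt (degree_sum_le _ _)
  rw [Finset.sup_lt_iff (by exact_mod_cast WithBot.bot_lt_coe n)]
  intro i hi
  exact lt_of_le_of_lt (degree_C_mul_X_pow_le _ _) (by exact_mod_cast mem_range.1 hi)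

private lemma cbarq_coeff (f : F[X]) (qq : ℕ) {α : ℕ} (hα : α < n) :
    (cbarq n qq f).coeff α = ((f %ₘ (X ^ n - 1)).coeff ((n - α) % n)) ^ qq := by
  rw [cbarq, finset_sum_coeff]
  rw [Finset.sum_eq_single α]
  · rw [coeff_C_mul, coeff_X_pow, if_pos rfl, mul_one]
  · intro b _ hb
    rw [coeff_C_mul, coeff_X_pow, if_neg (Ne.symm hb), mul_zero]
  · intro h
    exact absurd (mem_range.2 hα) h

private lemma inv_invol (hn : 0 < n) {i : ℕ} (hi : i < n) : (n - (n - i) % n) % n = i := by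
  rcases Nat.eq_zero_or_pos i with h0 | h0
  · subst h0; simp
  · have h1 : (n - i) % n = n - i := Nat.mod_eq_of_lt (by omega)
    rw [h1]
    have h2 : n - (n - i) = i := by omega
    rw [h2, Nat.mod_eq_of_lt hi]

private lemma cond_iff (hn : 0 < n) {α l m : ℕ} (hα : α < n) (hl : l < n) (hm : m < n) :
    (((n - α) % n + l) % n = m) ↔ (l = (α + m) % n) := by
  have key : ∀ x : ℕ, x < 2 * n → x % n = if x < n then x else x - n := by
    intro x hx
    split_ifs with h
    · exact Nat.mod_eq_of_lt h
    · rw [Nat.mod_eq_sub_mod (le_of_not_gt h), Nat.mod_eq_of_lt (by omega)]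
  have hna : (n - α) % n = if α = 0 then 0 else n - α := by
    split_ifs with h
    · subst h; simp
    · exact Nat.mod_eq_of_lt (by omega)
  rw [hna]
  split_ifs with h
  · subst h
    rw [zero_add, zero_add, Nat.mod_eq_of_lt hl, Nat.mod_eq_of_lt hm]
  · rw [key (n - α + l) (by omega), key (α + m) (by omega)]
    split_ifs <;> omega

end Aux

/-- For `f, g, h ∈ R = F_{q²}[x]/⟨xⁿ-1⟩`,
`⟨[f(x)g(x)], [h(x)]⟩_h = ⟨[g(x)], [f̄^q(x)h(x)]⟩_h` for the Hermitian inner product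
`⟨x,y⟩_h = ∑ xᵢ yᵢ^q` of coefficient vectors. -/
theorem hermitian_inner_mul_left_eq_barq_right
    {F : Type*} [Field F] [Fintype F] {q n : ℕ} (hq : Fintype.card F = q ^ 2) (hn : 0 < n)
    (f g h : F[X]) :
    ∑ i : Fin n, ((f * g) %ₘ (X ^ n - 1)).coeff i.val *
        ((h %ₘ (X ^ n - 1)).coeff i.val) ^ q =
      ∑ i : Fin n, (g %ₘ (X ^ n - 1)).coeff i.val *
        (((cbarq n q f * h) %ₘ (X ^ n - 1)).coeff i.val) ^ q := by
  classical
  -- characteristic setup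
  obtain ⟨k, hp, hcard⟩ := FiniteField.card F (ringChar F)
  set p := ringChar F with hpdef
  haveI : Fact p.Prime := ⟨hp⟩
  have hqd : q ∣ p ^ (k : ℕ) := by
    rw [← hcard, hq]
    exact dvd_pow_self q two_ne_zero
  obtain ⟨e, -, hqe⟩ := (Nat.dvd_prime_pow hp).1 hqd
  have hfrob : ∀ (s : Finset ℕ) (fn : ℕ → F),
      (∑ i ∈ s, fn i) ^ q = ∑ i ∈ s, (fn i) ^ q := by
    intro s fn
    rw [hqe]
    exact sum_pow_char_pow p e s fn
  have hpowq : ∀ a : F, (a ^ q) ^ q = a := by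
    intro a
    rw [← pow_mul, ← sq, ← hq, FiniteField.pow_card]
  have hq0 : q ≠ 0 := by
    rw [hqe]; exact pow_ne_zero _ hp.ne_zero
  rw [Fin.sum_univ_eq_sum_range (fun i => ((f * g) %ₘ (X ^ n - 1)).coeff i *
        ((h %ₘ (X ^ n - 1)).coeff i) ^ q) n,
    Fin.sum_univ_eq_sum_range (fun i => (g %ₘ (X ^ n - 1)).coeff i *
        (((cbarq n q f * h) %ₘ (X ^ n - 1)).coeff i) ^ q) n]
  -- common middle expression
  have hLHS : ∑ i ∈ range n, ((f * g) %ₘ (X ^ n - 1)).coeff i *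
        ((h %ₘ (X ^ n - 1)).coeff i) ^ q
      = ∑ α ∈ range n, ∑ β ∈ range n,
          (f %ₘ (X ^ n - 1)).coeff α * (g %ₘ (X ^ n - 1)).coeff β *
            ((h %ₘ (X ^ n - 1)).coeff ((α + β) % n)) ^ q := by
    simp only [prod_mod_coeff hn f g, sum_mul]
    rw [sum_comm]
    refine sum_congr rfl fun α hα => ?_
    rw [sum_comm]
    refine sum_congr rfl fun β hβ => ?_
    simp only [mul_ite, ite_mul, mul_one, mul_zero, zero_mul, one_mul]
    rw [Finset.sum_ite_eq (range n) ((α + β) % n)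
      (fun i => (f %ₘ (X ^ n - 1)).coeff α * (g %ₘ (X ^ n - 1)).coeff β *
        ((h %ₘ (X ^ n - 1)).coeff i) ^ q),
      if_pos (mem_range.2 (Nat.mod_lt _ hn))]
  have hcoeff : ∀ m ∈ range n, (((cbarq n q f * h) %ₘ (X ^ n - 1)).coeff m) ^ q
      = ∑ α ∈ range n, (f %ₘ (X ^ n - 1)).coeff α *
          ((h %ₘ (X ^ n - 1)).coeff ((α + m) % n)) ^ q := by
    intro m hm
    rw [prod_mod_coeff hn, hfrob]
    have step1 : ∀ α ∈ range n,
        (∑ l ∈ range n, (cbarq n q f %ₘ (X ^ n - 1)).coeff α *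
            (h %ₘ (X ^ n - 1)).coeff l * (if (α + l) % n = m then 1 else 0)) ^ q
        = ∑ l ∈ range n, (f %ₘ (X ^ n - 1)).coeff ((n - α) % n) *
            ((h %ₘ (X ^ n - 1)).coeff l) ^ q * (if (α + l) % n = m then 1 else 0) := by
      intro α hα
      rw [hfrob]
      refine sum_congr rfl fun l hl => ?_
      rw [cbarq_mod hn, cbarq_coeff f q (mem_range.1 hα), mul_pow, mul_pow, hpowq]
      congr 1
      split_ifs
      · exact one_pow q
      · exact zero_pow hq0
    rw [sum_congr rfl step1]
    -- reindex x ↦ (n - x) % n and collapse the inner sum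
    refine Finset.sum_nbij' (fun α => (n - α) % n) (fun α => (n - α) % n)
      (fun α hα => mem_range.2 (Nat.mod_lt _ hn))
      (fun α hα => mem_range.2 (Nat.mod_lt _ hn))
      (fun α hα => inv_invol hn (mem_range.1 hα))
      (fun α hα => inv_invol hn (mem_range.1 hα))
      (fun x hx => ?_)
    have hxn : (n - x) % n < n := Nat.mod_lt _ hn
    have hcond : ∀ l ∈ range n,
        (f %ₘ (X ^ n - 1)).coeff ((n - x) % n) * ((h %ₘ (X ^ n - 1)).coeff l) ^ q *
            (if ((x + l) % n = m) then 1 else 0)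
        = if l = ((n - x) % n + m) % n then (f %ₘ (X ^ n - 1)).coeff ((n - x) % n) *
            ((h %ₘ (X ^ n - 1)).coeff l) ^ q else 0 := by
      intro l hl
      have hiff : ((x + l) % n = m) ↔ (l = ((n - x) % n + m) % n) := by
        have := cond_iff hn hxn (mem_range.1 hl) (mem_range.1 hm)
        rwa [inv_invol hn (mem_range.1 hx)] at this
      rw [if_congr hiff rfl rfl]
      split_ifs
      · rw [mul_one]
      · rw [mul_zero]
    rw [sum_congr rfl hcond,
      Finset.sum_ite_eq' (range n) (((n - x) % n + m) % n)
        (fun l => (f %ₘ (X ^ n - 1)).coeff ((n - x) % n) *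
          ((h %ₘ (X ^ n - 1)).coeff l) ^ q),
      if_pos (mem_range.2 (Nat.mod_lt _ hn))]
  have hRHS : ∑ m ∈ range n, (g %ₘ (X ^ n - 1)).coeff m *
        (((cbarq n q f * h) %ₘ (X ^ n - 1)).coeff m) ^ q
      = ∑ m ∈ range n, (g %ₘ (X ^ n - 1)).coeff m *
          ∑ α ∈ range n, (f %ₘ (X ^ n - 1)).coeff α *
            ((h %ₘ (X ^ n - 1)).coeff ((α + m) % n)) ^ q :=
    sum_congr rfl fun m hm => by rw [hcoeff m hm]
  rw [hLHS, hRHS]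
  simp only [mul_sum]
  rw [sum_comm]
  exact sum_congr rfl fun α hα => sum_congr rfl fun m hm => by ring
end

section
/- Let C be a cyclic code of length n over F_q with generator polynomial g(x) dividing x^n − 1, with gcd(n,q)=1. Then C is a Euclidean LCD code if and only if g(x) is self-reciprocal, i.e., g(x) = g̃(x) where g̃(x) = x^{deg g} g(x^{−1}) normalized to be monic. -/
open Polynomial Finset

/-- The cyclic code of length `n` generated by `g(x)`: the set of coefficient vectors of the
multiples of `g(x)` in `R = F[x]/⟨xⁿ-1⟩`. -/
noncomputable def cyclicCode {F : Type*} [Field F] (n : ℕ) (g : F[X]) : Set (Fin n → F) :=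
  {v | ∃ a : F[X], v = fun i => ((a * g) %ₘ (X ^ n - 1)).coeff i.val}

/-- The Euclidean dual of a set of vectors in `F^n`. -/
def dualE {F : Type*} [Field F] {n : ℕ} (S : Set (Fin n → F)) : Set (Fin n → F) :=
  {v | ∀ u ∈ S, ∑ i, u i * v i = 0}

/-- The monic reciprocal polynomial `g̃(x) = x^{deg g} g(x⁻¹)`, normalized monic. -/
noncomputable def gtilde {F : Type*} [Field F] (g : F[X]) : F[X] :=
  C (g.coeff 0)⁻¹ * g.reverse

namespace CycAux

variable {F : Type*} [Field F] {n : ℕ}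

noncomputable def P (v : Fin n → F) : F[X] := ∑ i : Fin n, C (v i) * X ^ (i : ℕ)

lemma coeff_P (v : Fin n → F) (k : ℕ) :
    (P v).coeff k = if h : k < n then v ⟨k, h⟩ else 0 := by
  classical
  rw [P, finset_sum_coeff]
  split_ifs with h
  · rw [Finset.sum_eq_single (⟨k, h⟩ : Fin n)]
    · simp
    · intro b _ hb
      have : (b : ℕ) ≠ k := fun hbk => hb (by ext; simpa using hbk)
      simp [coeff_X_pow, this.symm]
    · simp
  · apply Finset.sum_eq_zero
    intro i _
    have : k ≠ (i : ℕ) := by omega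
    simp [coeff_X_pow, this]

lemma coeff_P_zero (v : Fin n → F) {k : ℕ} (hk : n ≤ k) : (P v).coeff k = 0 := by
  rw [coeff_P]; simp [Nat.not_lt.mpr hk]

lemma coeff_P_lt (v : Fin n → F) (i : Fin n) : (P v).coeff i = v i := by
  rw [coeff_P]; simp

lemma degree_P_lt (v : Fin n → F) : (P v).degree < (n : ℕ) := by
  rw [degree_lt_iff_coeff_zero]
  intro m hm
  exact coeff_P_zero v (by exact_mod_cast hm)

lemma natDegree_P_le (v : Fin n → F) : (P v).natDegree ≤ n - 1 := by
  rw [natDegree_le_iff_coeff_eq_zero]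
  intro m hm
  exact coeff_P_zero v (by omega)

lemma P_coeff (p : F[X]) (hp : p.degree < (n : ℕ)) :
    P (n := n) (fun i => p.coeff i) = p := by
  ext k
  rw [coeff_P]
  split_ifs with h
  · rfl
  · exact (coeff_eq_zero_of_degree_lt (lt_of_lt_of_le hp (by exact_mod_cast Nat.not_lt.mp h))).symm

lemma P_zero : P (0 : Fin n → F) = 0 := by simp [P]

lemma eq_zero_of_P (v : Fin n → F) (h : P v = 0) : v = 0 := by
  funext i
  have := coeff_P_lt v i
  rw [h] at this
  simpa using this.symm

lemma mem_code_iff (hn : 0 < n) {g : F[X]} (hm : g.Monic) (hd : g ∣ X ^ n - 1)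
    (v : Fin n → F) : v ∈ cyclicCode n g ↔ g ∣ P v := by
  have hM : (X ^ n - 1 : F[X]).Monic := by
    simpa using monic_X_pow_sub_C (1 : F) hn.ne'
  have hdegM : (X ^ n - 1 : F[X]).degree = (n : ℕ) := by
    simpa using degree_X_pow_sub_C hn (1 : F)
  constructor
  · rintro ⟨a, rfl⟩
    have hdeg : ((a * g) %ₘ (X ^ n - 1)).degree < (n : ℕ) := by
      rw [← hdegM]; exact degree_modByMonic_lt _ hM
    rw [P_coeff _ hdeg, modByMonic_eq_sub_mul_div _ (X ^ n - 1)]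
    exact dvd_sub (dvd_mul_left g a) (hd.trans (dvd_mul_right _ _))
  · rintro ⟨b, hb⟩
    refine ⟨b, ?_⟩
    have hbg : (b * g) %ₘ (X ^ n - 1) = b * g := by
      rw [modByMonic_eq_self_iff hM, hdegM, mul_comm, ← hb]
      exact degree_P_lt v
    funext i
    rw [hbg, mul_comm, ← hb, coeff_P_lt]

lemma sum_mul_eq (hn : 0 < n) (u v : Fin n → F) :
    ∑ i, u i * v i = (P u * reflect (n - 1) (P v)).coeff (n - 1) := by
  rw [P, Finset.sum_mul, finset_sum_coeff]
  apply Finset.sum_congr rfl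
  intro i _
  have hi : (i : ℕ) ≤ n - 1 := by omega
  rw [mul_assoc, coeff_C_mul]
  congr 1
  have h3 : ((X : F[X]) ^ (i : ℕ) * reflect (n - 1) (P v)).coeff (n - 1)
      = (reflect (n - 1) (P v)).coeff (n - 1 - (i : ℕ)) := by
    rw [coeff_X_pow_mul', if_pos hi]
  rw [h3, coeff_reflect, revAt_le (by omega),
    show n - 1 - (n - 1 - (i : ℕ)) = (i : ℕ) from by omega, coeff_P_lt]

lemma natDegree_reflect_P_le (v : Fin n → F) : (reflect (n - 1) (P v)).natDegree ≤ n - 1 := by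
  rw [natDegree_le_iff_coeff_eq_zero]
  intro m hm
  rw [coeff_reflect, revAt_eq_self_of_lt hm]
  exact coeff_P_zero v (by omega)

lemma reflect_reflect_eq (N : ℕ) (f : F[X]) : reflect N (reflect N f) = f := by
  ext k
  rw [coeff_reflect, coeff_reflect, revAt_invol]

lemma mem_dual_iff_coeff (hn : 0 < n) {g : F[X]} (hm : g.Monic) (hd : g ∣ X ^ n - 1)
    (v : Fin n → F) :
    v ∈ dualE (cyclicCode n g) ↔
      ∀ j, g.natDegree ≤ j → j < n → (g * reflect (n - 1) (P v)).coeff j = 0 := by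
  constructor
  · intro hv j hdj hjn
    set p : F[X] := X ^ (n - 1 - j) * g with hp
    have hpdeg : p.degree < (n : ℕ) := by
      have h1 : p.degree = (((n - 1 - j) + g.natDegree : ℕ) : WithBot ℕ) := by
        rw [hp, degree_mul, degree_X_pow, degree_eq_natDegree hm.ne_zero]
        push_cast; ring
      rw [h1]
      exact_mod_cast (by omega : (n - 1 - j) + g.natDegree < n)
    have hmem : (fun i : Fin n => p.coeff i) ∈ cyclicCode n g := by
      rw [mem_code_iff hn hm hd, P_coeff _ hpdeg]
      exact dvd_mul_left g _
    have hu := hv _ hmem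
    rw [sum_mul_eq hn _ v, P_coeff _ hpdeg] at hu
    have h1 : n - 1 = j + (n - 1 - j) := by omega
    rw [← coeff_X_pow_mul (g * reflect (n - 1) (P v)) (n - 1 - j) j, ← mul_assoc, ← hp, ← h1]
    exact hu
  · intro hcoef u hu
    obtain ⟨b, hb⟩ := (mem_code_iff hn hm hd u).mp hu
    rw [sum_mul_eq hn u v, hb]
    have h1 : g * b * reflect (n - 1) (P v) = b * (g * reflect (n - 1) (P v)) := by ring
    rw [h1, coeff_mul]
    apply Finset.sum_eq_zero
    rintro ⟨x, y⟩ hxy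
    rw [Finset.HasAntidiagonal.mem_antidiagonal] at hxy
    by_cases hb0 : b = 0
    · simp [hb0]
    by_cases hy : g.natDegree ≤ y
    · rw [hcoef y hy (by omega), mul_zero]
    · have hnd : g.natDegree + b.natDegree ≤ n - 1 := by
        have h2 := natDegree_P_le u
        rwa [hb, natDegree_mul hm.ne_zero hb0] at h2
      rw [coeff_eq_zero_of_natDegree_lt (by omega : b.natDegree < x), zero_mul]

lemma coeff_flip_iff (hn : 0 < n) {g : F[X]} (hm : g.Monic) (v : Fin n → F) :
    (∀ j, g.natDegree ≤ j → j < n → (g * reflect (n - 1) (P v)).coeff j = 0) ↔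
      ∀ k, g.natDegree ≤ k → k < n → (g.reverse * P v).coeff k = 0 := by
  have key : g.reverse * P v
      = reflect (g.natDegree + (n - 1)) (g * reflect (n - 1) (P v)) := by
    rw [reflect_mul g _ le_rfl (natDegree_reflect_P_le v), reflect_reflect_eq]
    rfl
  constructor
  · intro hc k hdk hkn
    rw [key, coeff_reflect, revAt_le (by omega)]
    exact hc _ (by omega) (by omega)
  · intro hc j hdj hjn
    have h1 := hc (g.natDegree + (n - 1) - j) (by omega) (by omega)
    rw [key, coeff_reflect, revAt_le (by omega)] at h1
    have h2 : g.natDegree + (n - 1) - (g.natDegree + (n - 1) - j) = j := by omega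
    rwa [h2] at h1


lemma coeff_iff_deg_mod (hn : 0 < n) {g : F[X]} (hm : g.Monic)
    (v : Fin n → F) :
    (∀ k, g.natDegree ≤ k → k < n → (g.reverse * P v).coeff k = 0) ↔
      ((g.reverse * P v) %ₘ (X ^ n - 1)).degree < (g.natDegree : WithBot ℕ) := by
  have hM : (X ^ n - 1 : F[X]).Monic := by
    simpa using monic_X_pow_sub_C (1 : F) hn.ne'
  have hdegM : (X ^ n - 1 : F[X]).degree = (n : ℕ) := by
    simpa using degree_X_pow_sub_C hn (1 : F)
  have hndM : (X ^ n - 1 : F[X]).natDegree = n := by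
    simpa using natDegree_X_pow_sub_C (n := n) (r := (1 : F))
  set f : F[X] := g.reverse * P v with hf
  have hfdeg : f.natDegree ≤ g.natDegree + (n - 1) :=
    natDegree_mul_le.trans (add_le_add g.reverse_natDegree_le (natDegree_P_le v))
  have hkey : ∀ k, g.natDegree ≤ k → k < n → (f %ₘ (X ^ n - 1)).coeff k = f.coeff k := by
    intro k hdk hkn
    have ht : (f /ₘ (X ^ n - 1)).coeff k = 0 := by
      by_cases hft : f.degree < (X ^ n - 1 : F[X]).degree
      · rw [(divByMonic_eq_zero_iff hM).mpr hft, coeff_zero]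
      · rw [not_lt, hdegM] at hft
        have hf0 : f ≠ 0 := by
          intro h0
          rw [h0, degree_zero] at hft
          exact absurd hft (by simp)
        have hnf : n ≤ f.natDegree := by
          rwa [degree_eq_natDegree hf0, Nat.cast_le] at hft
        apply coeff_eq_zero_of_natDegree_lt
        rw [natDegree_divByMonic f hM, hndM]
        omega
    have h3 : ((X ^ n - 1 : F[X]) * (f /ₘ (X ^ n - 1))).coeff k = 0 := by
      rw [sub_mul, one_mul, coeff_sub, coeff_X_pow_mul',
        if_neg (by omega : ¬ n ≤ k), ht]
      ring
    rw [modByMonic_eq_sub_mul_div f (X ^ n - 1), coeff_sub, h3, sub_zero]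
  constructor
  · intro hc
    rw [degree_lt_iff_coeff_zero]
    intro m hdm
    by_cases hmn : m < n
    · rw [hkey m hdm hmn]
      exact hc m hdm hmn
    · have hdr : (f %ₘ (X ^ n - 1)).degree < (n : ℕ) := by
        rw [← hdegM]; exact degree_modByMonic_lt f hM
      exact coeff_eq_zero_of_degree_lt
        (hdr.trans_le (by exact_mod_cast Nat.not_lt.mp hmn))
  · intro hr k hdk hkn
    rw [← hkey k hdk hkn]
    exact coeff_eq_zero_of_degree_lt (hr.trans_le (by exact_mod_cast hdk))

lemma mem_dual_iff (hn : 0 < n) {g : F[X]} (hm : g.Monic) (hd : g ∣ X ^ n - 1)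
    (v : Fin n → F) :
    v ∈ dualE (cyclicCode n g) ↔
      ((g.reverse * P v) %ₘ (X ^ n - 1)).degree < (g.natDegree : WithBot ℕ) := by
  rw [mem_dual_iff_coeff hn hm hd, coeff_flip_iff hn hm, coeff_iff_deg_mod hn hm]

end CycAux

/-- Yang–Massey: A cyclic code `C = ⟨g⟩` of length `n` over `F_q` with
`gcd(n,q)=1` is Euclidean LCD iff `g` is self-reciprocal, i.e. `g = g̃`. -/
theorem cyclic_lcd_iff_self_reciprocal
    {F : Type*} [Field F] [Fintype F] {n : ℕ} (hn : 0 < n) (hch : (n : F) ≠ 0)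
    (g : F[X]) (hm : g.Monic) (hd : g ∣ X ^ n - 1) :
    cyclicCode n g ∩ dualE (cyclicCode n g) = {0} ↔ g = gtilde g := by
  classical
  have hM : (X ^ n - 1 : F[X]).Monic := by
    simpa using monic_X_pow_sub_C (1 : F) hn.ne'
  have hdegM : (X ^ n - 1 : F[X]).degree = (n : ℕ) := by
    simpa using degree_X_pow_sub_C hn (1 : F)
  have hndM : (X ^ n - 1 : F[X]).natDegree = n := by
    simpa using natDegree_X_pow_sub_C (n := n) (r := (1 : F))
  have hM0 : (X ^ n - 1 : F[X]) ≠ 0 := hM.ne_zero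
  obtain ⟨h, hh⟩ := hd
  have hd : g ∣ X ^ n - 1 := ⟨h, hh⟩
  set c := g.coeff 0 with hc0
  have hc : c ≠ 0 := by
    intro h0
    have hXd : ((X : F[X]) ^ n - 1).coeff 0 = 0 :=
      X_dvd_iff.mp ((X_dvd_iff.mpr h0).trans hd)
    have hXd' : (0 : F) - 1 = 0 := by simpa [coeff_X_pow, hn.ne'.symm] using hXd
    simpa using hXd'
  have hrevM : (X ^ n - 1 : F[X]).reverse = -(X ^ n - 1) := by
    have h1 : reflect n (1 : F[X]) = X ^ n := by
      rw [← C_1, reflect_C, C_1, one_mul]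
    rw [reverse, hndM, reflect_sub, reflect_monomial, revAt_le (le_refl n),
      Nat.sub_self, pow_zero, h1]
    ring
  have hrevd : g.reverse.coeff g.natDegree = c := by
    rw [coeff_reverse, revAt_le le_rfl, Nat.sub_self]
  have hgt_le : (gtilde g).natDegree ≤ g.natDegree :=
    (natDegree_C_mul_le _ _).trans g.reverse_natDegree_le
  have hgt_coeff : (gtilde g).coeff g.natDegree = 1 := by
    rw [gtilde, coeff_C_mul, hrevd, inv_mul_cancel₀ hc]
  have hgtm : (gtilde g).Monic :=
    monic_of_natDegree_le_of_coeff_eq_one _ hgt_le hgt_coeff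
  have hgtnd : (gtilde g).natDegree = g.natDegree :=
    le_antisymm hgt_le (le_natDegree_of_ne_zero (by rw [hgt_coeff]; exact one_ne_zero))
  have hrevg : g.reverse = C c * gtilde g := by
    rw [gtilde, ← mul_assoc, ← C_mul, mul_inv_cancel₀ hc, C_1, one_mul]
  have hgtd : gtilde g ∣ X ^ n - 1 := by
    have h1 : (X ^ n - 1 : F[X]) = g.reverse * (-h.reverse) := by
      rw [← neg_neg (X ^ n - 1 : F[X]), ← hrevM, hh, reverse_mul_of_domain]
      ring
    exact (Dvd.intro_left (C c) hrevg.symm).trans ⟨-h.reverse, h1⟩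
  constructor
  · intro H
    obtain ⟨h', hh'⟩ := hgtd
    have hgtdvd : gtilde g ∣ g := by
      by_contra hnd
      have hh'0 : h' ≠ 0 := by
        rintro rfl; rw [mul_zero] at hh'; exact hM0 hh'
      set p := lcm g h' with hplcm
      have hp0 : p ≠ 0 := by
        rw [hplcm, Ne, _root_.lcm_eq_zero_iff]
        push_neg
        exact ⟨hm.ne_zero, hh'0⟩
      have hpM : p ∣ X ^ n - 1 := lcm_dvd hd ⟨gtilde g, by rw [hh']; ring⟩
      have hnMp : ¬ (X ^ n - 1 : F[X]) ∣ p := by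
        intro hMp
        have h2 : (X ^ n - 1 : F[X]) ∣ g * h' :=
          hMp.trans (lcm_dvd (dvd_mul_right g h') (dvd_mul_left h' g))
        rw [hh'] at h2
        exact hnd ((mul_dvd_mul_iff_right hh'0).mp h2)
      have hpdeg : p.degree < (n : ℕ) := by
        obtain ⟨u, hu⟩ := hpM
        have hu0 : u ≠ 0 := by
          rintro rfl; rw [mul_zero] at hu; exact hM0 hu
        by_contra hge
        rw [not_lt] at hge
        have hple : p.degree ≤ (n : ℕ) := hdegM ▸ degree_le_of_dvd ⟨u, hu⟩ hM0
        have hpdeg' : p.degree = (n : ℕ) := le_antisymm hple hge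
        have hp0' : p ≠ 0 := hp0
        have hu1 : IsUnit u := by
          rw [isUnit_iff_degree_eq_zero]
          have h3 : p.degree + u.degree = (n : ℕ) := by
            rw [← degree_mul, ← hu, hdegM]
          rw [hpdeg', degree_eq_natDegree hu0] at h3
          rw [degree_eq_natDegree hu0]
          norm_cast at h3 ⊢
          omega
        obtain ⟨w, hw⟩ := isUnit_iff_exists_inv.mp hu1
        exact hnMp ⟨w, by rw [hu, mul_assoc, hw, mul_one]⟩
      set v : Fin n → F := fun i => p.coeff i with hv
      have hPv : CycAux.P v = p := CycAux.P_coeff p hpdeg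
      have hvC : v ∈ cyclicCode n g := by
        rw [CycAux.mem_code_iff hn hm hd, hPv]
        exact dvd_lcm_left g h'
      have hvD : v ∈ dualE (cyclicCode n g) := by
        rw [CycAux.mem_dual_iff hn hm hd, hPv]
        have hMd : (X ^ n - 1 : F[X]) ∣ g.reverse * p := by
          obtain ⟨t, ht⟩ := dvd_lcm_right g h'
          refine ⟨C c * t, ?_⟩
          rw [hrevg, hplcm, ht, hh']
          ring
        rw [(modByMonic_eq_zero_iff_dvd hM).mpr hMd, degree_zero]
        exact WithBot.bot_lt_coe _
      have hv0 : v = 0 := by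
        have hmem : v ∈ cyclicCode n g ∩ dualE (cyclicCode n g) := ⟨hvC, hvD⟩
        rw [H] at hmem
        simpa using hmem
      exact hp0 (by rw [← hPv, hv0, CycAux.P_zero])
    obtain ⟨u, hu⟩ := hgtdvd
    have hu0 : u ≠ 0 := by
      rintro rfl; rw [mul_zero] at hu; exact hm.ne_zero hu
    have hund : u.natDegree = 0 := by
      have h4 : g.natDegree = (gtilde g).natDegree + u.natDegree := by
        conv_lhs => rw [hu]
        rw [natDegree_mul hgtm.ne_zero hu0]
      rw [hgtnd] at h4
      omega
    have h6 : (gtilde g).leadingCoeff * u.leadingCoeff = 1 := by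
      rw [← leadingCoeff_mul, ← hu, hm.leadingCoeff]
    rw [hgtm.leadingCoeff, one_mul, leadingCoeff, hund] at h6
    have h5 : u = C (u.coeff 0) := eq_C_of_natDegree_eq_zero hund
    have hu1 : u = 1 := by rw [h5, h6, C_1]
    rw [hu1, mul_one] at hu
    exact hu
  · intro hself
    have hgrev : g.reverse = C c * g := by rw [hrevg, ← hself]
    have hsep : (X ^ n - 1 : F[X]).Separable := by
      simpa using separable_X_pow_sub_C (1 : F) hch one_ne_zero
    rw [hh] at hsep
    have hcop : IsCoprime g h := hsep.isCoprime
    apply Set.eq_singleton_iff_unique_mem.mpr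
    constructor
    · refine ⟨⟨0, ?_⟩, ?_⟩
      · funext i; simp
      · intro u _; simp
    · rintro v ⟨hvC, hvD⟩
      rw [CycAux.mem_code_iff hn hm hd] at hvC
      obtain ⟨m, hmv⟩ := hvC
      rw [CycAux.mem_dual_iff hn hm hd] at hvD
      have hgr : g ∣ (g.reverse * CycAux.P v) %ₘ (X ^ n - 1) := by
        rw [modByMonic_eq_sub_mul_div _ (X ^ n - 1)]
        refine dvd_sub ⟨C c * CycAux.P v, ?_⟩ (hd.trans (dvd_mul_right _ _))
        rw [hgrev]; ring
      have hr0 : (g.reverse * CycAux.P v) %ₘ (X ^ n - 1) = 0 :=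
        eq_zero_of_dvd_of_degree_lt hgr
          (by rw [degree_eq_natDegree hm.ne_zero]; exact hvD)
      have h7 : (X ^ n - 1 : F[X]) ∣ g.reverse * CycAux.P v :=
        (modByMonic_eq_zero_iff_dvd hM).mp hr0
      rw [hgrev] at h7
      have hMdvd : (X ^ n - 1 : F[X]) ∣ g * CycAux.P v := by
        have h8 : (X ^ n - 1 : F[X]) ∣ C c⁻¹ * (C c * g * CycAux.P v) :=
          h7.mul_left _
        rwa [← mul_assoc, ← mul_assoc, ← C_mul, inv_mul_cancel₀ hc, C_1, one_mul] at h8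
      rw [hmv, hh] at hMdvd
      have h9 : h ∣ g * m := (mul_dvd_mul_iff_left hm.ne_zero).mp hMdvd
      have h10 : h ∣ m := hcop.symm.dvd_of_dvd_mul_left h9
      have h11 : (X ^ n - 1 : F[X]) ∣ CycAux.P v := by
        rw [hmv, hh]
        exact mul_dvd_mul (dvd_refl g) h10
      have h12 : CycAux.P v = 0 :=
        eq_zero_of_dvd_of_degree_lt h11 (by rw [hdegM]; exact CycAux.degree_P_lt v)
      exact CycAux.eq_zero_of_P v h12
end

section
/- Let ℓ = 2m. For any a(x), b(x) ∈ R, the symplectic inner product of c₁ = ([a g f₀],…,[a g f_{ℓ−1}]) and c₂ = ([b g f₀],…,[b g f_{ℓ−1}]) equals ⟨[a(x)g(x) Σ_{j=0}^{m−1}(fⱼ(x)f̄_{m+j}(x) − f_{m+j}(x)f̄ⱼ(x))], [b(x)g(x)]⟩, the Euclidean inner product in F_q^n. -/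
open Polynomial Finset

/-- The reciprocal `f̄(x)`: the image of `xⁿ f(x⁻¹)` in `R = F[x]/⟨xⁿ-1⟩`. -/
noncomputable def cbar {F : Type*} [Field F] (n : ℕ) (f : F[X]) : F[X] :=
  ∑ i ∈ Finset.range n, C ((f %ₘ (X ^ n - 1)).coeff ((n - i) % n)) * X ^ i

namespace QCAux

variable {F : Type*} [Field F] {n : ℕ} [NeZero n]

noncomputable instance instCoeFunAMA {F : Type*} [Field F] {n : ℕ} :
    CoeFun (AddMonoidAlgebra F (ZMod n)) (fun _ => ZMod n → F) :=
  ⟨fun u => u.coeff⟩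

/-- The natural algebra map `F[X] → F[ZMod n]` sending `X` to the generator. -/
noncomputable def phi (F : Type*) [Field F] (n : ℕ) :
    F[X] →ₐ[F] AddMonoidAlgebra F (ZMod n) :=
  aeval (AddMonoidAlgebra.single (1 : ZMod n) (1 : F))

omit [NeZero n] in
lemma phi_monomial (k : ℕ) (c : F) :
    phi F n (monomial k c) = AddMonoidAlgebra.single (k : ZMod n) c := by
  have halg : algebraMap F (AddMonoidAlgebra F (ZMod n)) c = AddMonoidAlgebra.single 0 c := by
    rw [AddMonoidAlgebra.coe_algebraMap]; rfl
  rw [← C_mul_X_pow_eq_monomial, map_mul, map_pow, phi, aeval_X, aeval_C,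
    AddMonoidAlgebra.single_pow, one_pow, halg, AddMonoidAlgebra.single_mul_single,
    zero_add, mul_one, nsmul_eq_mul, mul_one]

omit [NeZero n] in
lemma phi_X_pow_sub_one : phi F n (X ^ n - 1) = 0 := by
  rw [map_sub, map_pow, map_one, phi, aeval_X, AddMonoidAlgebra.single_pow, one_pow,
    nsmul_eq_mul, mul_one, ZMod.natCast_self, sub_eq_zero, AddMonoidAlgebra.one_def]

lemma monic_D : (X ^ n - 1 : F[X]).Monic := by
  have := monic_X_pow_sub_C (1 : F) (NeZero.ne n)
  rwa [map_one] at this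

lemma phi_modByMonic (p : F[X]) : phi F n (p %ₘ (X ^ n - 1)) = phi F n p := by
  rw [modByMonic_eq_sub_mul_div, map_sub, map_mul, phi_X_pow_sub_one,
    zero_mul, sub_zero]

lemma phi_apply_of_natDegree_lt (r : F[X]) (hr : r.natDegree < n) (j : ZMod n) :
    phi F n r j = r.coeff j.val := by
  conv_lhs => rw [r.as_sum_range' n hr]
  rw [map_sum, AddMonoidAlgebra.coeff_sum, Finsupp.finset_sum_apply]
  simp only [phi_monomial, AddMonoidAlgebra.coeff_single, Finsupp.single_apply]
  rw [Finset.sum_eq_single j.val]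
  · rw [if_pos (ZMod.natCast_rightInverse j)]
  · intro i hi hne
    rw [if_neg]
    intro hcast
    exact hne (by rw [← ZMod.val_cast_of_lt (Finset.mem_range.mp hi), hcast])
  · intro h
    exact absurd (Finset.mem_range.mpr (ZMod.val_lt j)) h

lemma natDegree_mod_lt (p : F[X]) : (p %ₘ (X ^ n - 1)).natDegree < n := by
  have h2 : (X ^ n - 1 : F[X]).natDegree = n := by
    have := natDegree_X_pow_sub_C (R := F) (n := n) (r := 1)
    rwa [map_one] at this
  have h1 : (X ^ n - 1 : F[X]) ≠ 1 := by
    intro h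
    rw [h, natDegree_one] at h2
    exact NeZero.ne n h2.symm
  have := natDegree_modByMonic_lt p monic_D h1
  rwa [h2] at this

lemma coeff_mod_eq_phi (p : F[X]) (j : ZMod n) :
    (p %ₘ (X ^ n - 1)).coeff j.val = phi F n p j := by
  rw [← phi_modByMonic]
  exact (phi_apply_of_natDegree_lt _ (natDegree_mod_lt p) j).symm

lemma sum_fin_eq_sum_zmod (f : ℕ → F) :
    ∑ i : Fin n, f i.val = ∑ j : ZMod n, f j.val := by
  refine Fintype.sum_bijective (fun i : Fin n => ((i : ℕ) : ZMod n)) ?_ _ _ (fun i => ?_)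
  · refine Function.bijective_iff_has_inverse.mpr
      ⟨fun j => ⟨j.val, ZMod.val_lt j⟩, fun i => ?_, fun j => ZMod.natCast_rightInverse j⟩
    ext
    exact ZMod.val_cast_of_lt i.isLt
  · rw [ZMod.val_cast_of_lt i.isLt]

/-- Euclidean inner product of residues, in terms of `phi`. -/
lemma inner_eq (p q : F[X]) :
    ∑ i : Fin n, (p %ₘ (X ^ n - 1)).coeff i.val * (q %ₘ (X ^ n - 1)).coeff i.val =
      ∑ x : ZMod n, phi F n p x * phi F n q x := by
  rw [sum_fin_eq_sum_zmod (fun k => (p %ₘ (X ^ n - 1)).coeff k * (q %ₘ (X ^ n - 1)).coeff k)]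
  exact Finset.sum_congr rfl fun x _ => by rw [coeff_mod_eq_phi, coeff_mod_eq_phi]

lemma phi_cbar (f : F[X]) (j : ZMod n) : phi F n (cbar n f) j = phi F n f (-j) := by
  have hval : (-j).val = (n - j.val) % n := by
    rw [ZMod.neg_val]
    split_ifs with h
    · rw [h, ZMod.val_zero, Nat.sub_zero, Nat.mod_self]
    · have h1 : j.val ≠ 0 := fun hv => h (by
        have := ZMod.natCast_rightInverse j
        rw [← this, hv, Nat.cast_zero])
      have h2 : j.val < n := ZMod.val_lt j
      rw [Nat.mod_eq_of_lt (by omega)]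
  rw [← coeff_mod_eq_phi f (-j), hval]
  unfold cbar
  simp only [C_mul_X_pow_eq_monomial]
  rw [map_sum, AddMonoidAlgebra.coeff_sum, Finsupp.finset_sum_apply]
  simp only [phi_monomial, AddMonoidAlgebra.coeff_single, Finsupp.single_apply]
  rw [Finset.sum_eq_single j.val]
  · rw [if_pos (ZMod.natCast_rightInverse j)]
  · intro i hi hne
    rw [if_neg]
    intro hcast
    exact hne (by rw [← ZMod.val_cast_of_lt (Finset.mem_range.mp hi), hcast])
  · intro h
    exact absurd (Finset.mem_range.mpr (ZMod.val_lt j)) h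

lemma mul_apply_conv (u v : AddMonoidAlgebra F (ZMod n)) (x : ZMod n) :
    (u * v) x = ∑ k : ZMod n, u k * v (x - k) := by
  have hinj : Function.Injective (fun k : ZMod n => (k, x - k)) := fun a b h => by
    simpa using congrArg Prod.fst h
  rw [AddMonoidAlgebra.mul_apply_antidiagonal u v x
    (Finset.univ.map ⟨fun k : ZMod n => (k, x - k), hinj⟩) ?_, Finset.sum_map]
  · rfl
  · intro p
    simp only [Finset.mem_map, Function.Embedding.coeFn_mk, Finset.mem_univ, true_and]
    constructor
    · rintro ⟨k, hk⟩
      rw [← hk]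
      ring
    · intro hp
      exact ⟨p.1, Prod.ext rfl (by rw [← hp, add_sub_cancel_left])⟩

lemma sum_mul_conv (u v w wb : AddMonoidAlgebra F (ZMod n))
    (h : ∀ x, wb x = w (-x)) :
    ∑ x : ZMod n, u x * (v * w) x = ∑ x : ZMod n, (u * wb) x * v x := by
  simp only [mul_apply_conv, Finset.mul_sum, Finset.sum_mul]
  rw [Finset.sum_comm]
  refine Finset.sum_congr rfl fun x _ => Finset.sum_congr rfl fun k _ => ?_
  rw [h, neg_sub]
  ring

lemma move_bar (p q r : F[X]) :
    ∑ x : ZMod n, phi F n p x * phi F n (q * r) x =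
      ∑ x : ZMod n, phi F n (p * cbar n r) x * phi F n q x := by
  rw [map_mul, map_mul]
  exact sum_mul_conv _ _ _ _ (phi_cbar r)

lemma sum_mul_swap {m : ℕ} (t : Fin m → F[X]) (q : F[X]) :
    ∑ x : ZMod n, phi F n (∑ j : Fin m, t j) x * phi F n q x =
      ∑ j : Fin m, ∑ x : ZMod n, phi F n (t j) x * phi F n q x := by
  calc ∑ x : ZMod n, phi F n (∑ j : Fin m, t j) x * phi F n q x
      = ∑ x : ZMod n, ∑ j : Fin m, phi F n (t j) x * phi F n q x :=
        Finset.sum_congr rfl fun x _ => by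
          rw [map_sum, AddMonoidAlgebra.coeff_sum, Finset.sum_apply', Finset.sum_mul]
    _ = ∑ j : Fin m, ∑ x : ZMod n, phi F n (t j) x * phi F n q x := Finset.sum_comm

end QCAux

/-- Let `ℓ = 2m`. For codewords `c₁ = ([a g f₀], …, [a g f_{ℓ-1}])` and
`c₂ = ([b g f₀], …, [b g f_{ℓ-1}])` of a 1-generator quasi-cyclic code, the symplectic inner
product `⟨c₁, c₂⟩_s` equals the Euclidean inner product
`⟨[a g ∑_{j<m} (fⱼ f̄_{m+j} - f_{m+j} f̄ⱼ)], [b g]⟩` in `F_qⁿ`. -/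
theorem qc_symplectic_inner_eq
    {F : Type*} [Field F] [Fintype F] {n m : ℕ} (hn : 0 < n)
    (a b g : F[X]) (f : Fin (m + m) → F[X]) :
    ∑ j : Fin m, ∑ i : Fin n,
        (((a * g * f (Fin.castAdd m j)) %ₘ (X ^ n - 1)).coeff i.val *
            ((b * g * f (Fin.natAdd m j)) %ₘ (X ^ n - 1)).coeff i.val -
          ((a * g * f (Fin.natAdd m j)) %ₘ (X ^ n - 1)).coeff i.val *
            ((b * g * f (Fin.castAdd m j)) %ₘ (X ^ n - 1)).coeff i.val) =
      ∑ i : Fin n,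
        ((a * g * ∑ j : Fin m, (f (Fin.castAdd m j) * cbar n (f (Fin.natAdd m j)) -
            f (Fin.natAdd m j) * cbar n (f (Fin.castAdd m j)))) %ₘ (X ^ n - 1)).coeff i.val *
          ((b * g) %ₘ (X ^ n - 1)).coeff i.val := by
  haveI : NeZero n := ⟨hn.ne'⟩
  rw [QCAux.inner_eq]
  conv_rhs => rw [Finset.mul_sum]
  rw [QCAux.sum_mul_swap]
  refine Finset.sum_congr rfl fun j _ => ?_
  rw [Finset.sum_sub_distrib, QCAux.inner_eq, QCAux.inner_eq,
    QCAux.move_bar (a * g * f (Fin.castAdd m j)) (b * g) (f (Fin.natAdd m j)),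
    QCAux.move_bar (a * g * f (Fin.natAdd m j)) (b * g) (f (Fin.castAdd m j))]
  have ht : a * g * (f (Fin.castAdd m j) * cbar n (f (Fin.natAdd m j)) -
      f (Fin.natAdd m j) * cbar n (f (Fin.castAdd m j))) =
      a * g * f (Fin.castAdd m j) * cbar n (f (Fin.natAdd m j)) -
      a * g * f (Fin.natAdd m j) * cbar n (f (Fin.castAdd m j)) := by ring
  rw [ht, map_sub, ← Finset.sum_sub_distrib]
  refine Finset.sum_congr rfl fun x _ => ?_
  rw [AddMonoidAlgebra.coeff_sub, Finsupp.sub_apply, sub_mul]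
end
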